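/- If α_i = α for all i, then m^{n-i}·C(n,i)·(-α)^{n-i} = Σ_{k=i}^{n} C(k,i)·r^{k-i}·w_{m,r;α}(n,k) for 0 ≤ i ≤ n. -/

import Mathlib

/-! Substituting `x = z / m` turns the defining identity into the polynomial identity
`(X - m α)^n = ∑ₖ w(n,k) (X + r)^k`; comparing the coefficients of `X^i` on both sides,
with the binomial theorem applied to each power, gives the formula. -/

open Finset Polynomial

theorem Polynomial.coeff_sum_C_mul_X_add_C_pow {R : Type*} [CommSemiring R] (a : ℕ → R) (r : R)
    (n i : ℕ) :
    (∑ k ∈ range (n + 1), C (a k) * (X + C r) ^ k).coeff i =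
      ∑ k ∈ Icc i n, (k.choose i : R) * r ^ (k - i) * a k := by
  simp only [finsetSum_coeff, coeff_C_mul, coeff_X_add_C_pow]
  symm
  refine sum_subset (fun k hk => by simp only [mem_Icc, mem_range] at hk ⊢; omega)
    (fun k _ hk => ?_) |>.trans (sum_congr rfl fun k _ => by ring)
  have hki : k < i := by simp only [mem_Icc, mem_range, not_and, not_le] at *; omega
  simp [Nat.choose_eq_zero_of_lt hki]

theorem Polynomial.coeff_X_sub_C_pow {R : Type*} [CommRing R] (c : R) (n i : ℕ) :
    ((X - C c) ^ n).coeff i = (-c) ^ (n - i) * (n.choose i : R) := by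
  rw [sub_eq_add_neg, ← map_neg, coeff_X_add_C_pow]

theorem X_sub_C_pow_eq_sum_of_forall_eval {K : Type*} [Field K] [Infinite K] {m r α : K}
    (hm : m ≠ 0) (n : ℕ) (w : ℕ → K)
    (hw : ∀ x : K, m ^ n * (x - α) ^ n = ∑ k ∈ range (n + 1), w k * (m * x + r) ^ k) :
    (X - C (m * α)) ^ n = ∑ k ∈ range (n + 1), C (w k) * (X + C r) ^ k := by
  refine Polynomial.funext fun z => ?_
  have hz : m * (z / m) = z := mul_div_cancel₀ z hm
  simpa [eval_finsetSum, mul_sub, hz, ← mul_pow] using hw (z / m)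

theorem stmt_3 (m r α : ℝ) (hm : m ≠ 0) (w : ℕ → ℕ → ℝ)
    (hw : ∀ n : ℕ, ∀ x : ℝ, m ^ n * (x - α) ^ n =
      ∑ k ∈ range (n + 1), w n k * (m * x + r) ^ k) :
    ∀ n i : ℕ, i ≤ n →
      m ^ (n - i) * (n.choose i : ℝ) * (-α) ^ (n - i) =
        ∑ k ∈ Icc i n, (k.choose i : ℝ) * r ^ (k - i) * w n k := by
  intro n i _
  have hcoeff := congrArg (coeff · i) (X_sub_C_pow_eq_sum_of_forall_eval hm n (w n) (hw n))
  simp only [coeff_X_sub_C_pow, coeff_sum_C_mul_X_add_C_pow] at hcoeff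
  rw [← hcoeff, neg_mul_eq_mul_neg, mul_pow]
  ring
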